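/- arXiv:math/0111250 — 2 statements merged into one kernel-verified Lean document; each statement's English description precedes it below -/
import Mathlib

section
/- Let P_1, …, P_q ∈ ℂ[X_1, …, X_n] have total degrees D_1, …, D_q, and for each j let ʰP_j ∈ ℂ[X_0, X_1, …, X_n] be the homogenization of P_j, i.e. the homogeneous polynomial of degree D_j such that ʰP_j(1, ζ_1, …, ζ_n) = P_j(ζ_1, …, ζ_n) for all ζ ∈ ℂⁿ. Let 𝒢_1, …, 𝒢_N ∈ ℂ[X_0, …, X_n] be homogeneous polynomials and set W := {ζ ∈ ℂⁿ : 𝒢_l(1, ζ_1, …, ζ_n) = 0 for l = 1, …, N}. Assume that the only common zero (ζ_0, …, ζ_n) ∈ ℂ^{n+1} of ʰP_1, …, ʰP_q, 𝒢_1, …, 𝒢_N satisfying ζ_0 = 0 is the point 0. Then there exist constants K > 0 and κ > 0 such that for every ζ ∈ W with ‖ζ‖ ≥ K one has Σ_{j=1}^q |P_j(ζ)| / ‖ζ‖^{D_j} ≥ κ. -/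
open MvPolynomial Filter Topology


/-- The Euclidean (ℓ²) norm on `ℂⁿ`. -/
noncomputable def e2norm {n : ℕ} (ζ : Fin n → ℂ) : ℝ :=
  ‖(EuclideanSpace.equiv (Fin n) ℂ).symm ζ‖

theorem eval_smul_homog {σ : Type*} [Fintype σ] {p : MvPolynomial σ ℂ} {d : ℕ}
    (hp : p.IsHomogeneous d) (c : ℂ) (x : σ → ℂ) :
    MvPolynomial.eval (c • x) p = c ^ d * MvPolynomial.eval x p := by
  rw [MvPolynomial.eval_eq, MvPolynomial.eval_eq, Finset.mul_sum]
  apply Finset.sum_congr rfl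
  intro m hm
  have hdeg : ∑ i ∈ m.support, m i = d := by
    have := hp (MvPolynomial.mem_support_iff.mp hm)
    simpa [Finsupp.weight_apply, Finsupp.sum] using this
  rw [← hdeg]
  simp only [Pi.smul_apply, smul_eq_mul, mul_pow, Finset.prod_mul_distrib,
    Finset.prod_pow_eq_pow_sum]
  ring

/-- if the homogenizations `ʰP₁, …, ʰP_q` of `P₁, …, P_q` and the homogeneous
equations `𝒢₁, …, 𝒢_N` defining (the projective closure of) `W` have no common zero on the
hyperplane at infinity `{ζ₀ = 0}` other than `0`, then the global Łojasiewicz-type lower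
bound `Σ_j |P_j(ζ)|/‖ζ‖^{D_j} ≥ κ` holds on `W` outside a ball of radius `K`. -/
theorem statement2 (n q N : ℕ)
    (P : Fin q → MvPolynomial (Fin n) ℂ) (D : Fin q → ℕ)
    (hD : ∀ j, (P j).totalDegree = D j)
    (hP : Fin q → MvPolynomial (Fin (n + 1)) ℂ)
    (hPhom : ∀ j, (hP j).IsHomogeneous (D j))
    (hPaff : ∀ j, ∀ ζ : Fin n → ℂ,
      MvPolynomial.eval (Fin.cons (1 : ℂ) ζ) (hP j) = MvPolynomial.eval ζ (P j))
    (G : Fin N → MvPolynomial (Fin (n + 1)) ℂ) (e : Fin N → ℕ)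
    (hG : ∀ l, (G l).IsHomogeneous (e l))
    (hinf : ∀ ξ : Fin (n + 1) → ℂ,
      (∀ j, MvPolynomial.eval ξ (hP j) = 0) →
      (∀ l, MvPolynomial.eval ξ (G l) = 0) → ξ 0 = 0 → ξ = 0) :
    ∃ K > (0 : ℝ), ∃ κ > (0 : ℝ), ∀ ζ : Fin n → ℂ,
      (∀ l, MvPolynomial.eval (Fin.cons (1 : ℂ) ζ) (G l) = 0) →
      K ≤ e2norm ζ →
      κ ≤ ∑ j, ‖MvPolynomial.eval ζ (P j)‖ / e2norm ζ ^ (D j) := by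
  by_contra hcon
  push_neg at hcon
  have key : ∀ k : ℕ, ∃ ζ : Fin n → ℂ,
      (∀ l, MvPolynomial.eval (Fin.cons (1 : ℂ) ζ) (G l) = 0) ∧
      ((k : ℝ) + 1) ≤ e2norm ζ ∧
      ∑ j, ‖MvPolynomial.eval ζ (P j)‖ / e2norm ζ ^ (D j) < 1 / ((k : ℝ) + 1) :=
    fun k => hcon ((k : ℝ) + 1) (by positivity) (1 / ((k : ℝ) + 1)) (by positivity)
  choose ζs hGs hns hss using key
  -- the basic quantities
  set v : ℕ → EuclideanSpace ℂ (Fin (n + 1)) :=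
    fun k => (EuclideanSpace.equiv (Fin (n + 1)) ℂ).symm (Fin.cons 1 (ζs k)) with hv
  set r : ℕ → ℝ := fun k => ‖v k‖ with hr
  have hrsq : ∀ k, r k = Real.sqrt (1 + e2norm (ζs k) ^ 2) := by
    intro k
    rw [hr]
    simp only [hv]
    rw [EuclideanSpace.norm_eq]
    simp [Fin.sum_univ_succ, e2norm, EuclideanSpace.norm_eq]
    rw [Real.sq_sqrt (by positivity)]
  have he2pos : ∀ k, (0 : ℝ) < e2norm (ζs k) := fun k =>
    lt_of_lt_of_le (by positivity) (hns k)
  have hr_ge_e2 : ∀ k, e2norm (ζs k) ≤ r k := by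
    intro k
    rw [hrsq k]
    calc e2norm (ζs k) = Real.sqrt (e2norm (ζs k) ^ 2) := by
          rw [Real.sqrt_sq (he2pos k).le]
      _ ≤ _ := Real.sqrt_le_sqrt (by linarith)
  have hrk : ∀ k : ℕ, (k : ℝ) + 1 ≤ r k := fun k : ℕ => (hns k).trans (hr_ge_e2 k)
  have hrpos : ∀ k, (0 : ℝ) < r k := fun k => lt_of_lt_of_le (by positivity) (hrk k)
  -- the normalized sequence on the unit sphere
  set f : ℕ → (Fin (n + 1) → ℂ) :=
    fun k => (((r k)⁻¹ : ℝ) : ℂ) • (Fin.cons 1 (ζs k) : Fin (n + 1) → ℂ) with hf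
  set ξ : ℕ → EuclideanSpace ℂ (Fin (n + 1)) :=
    fun k => (EuclideanSpace.equiv (Fin (n + 1)) ℂ).symm (f k) with hξ
  have hξsphere : ∀ k, ξ k ∈ Metric.sphere (0 : EuclideanSpace ℂ (Fin (n + 1))) 1 := by
    intro k
    rw [mem_sphere_zero_iff_norm]
    have : ξ k = (((r k)⁻¹ : ℝ) : ℂ) • v k := by
      simp only [hξ, hf, hv, map_smul]
    rw [this, norm_smul]
    simp only [Complex.norm_real, Real.norm_eq_abs, abs_of_pos (inv_pos.mpr (hrpos k))]
    exact inv_mul_cancel₀ (hrpos k).ne'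
  obtain ⟨xiL, hxiLmem, φ, hφmono, hφtend⟩ :=
    (isCompact_sphere (0 : EuclideanSpace ℂ (Fin (n + 1))) 1).tendsto_subseq hξsphere
  set w : Fin (n + 1) → ℂ := EuclideanSpace.equiv (Fin (n + 1)) ℂ xiL with hw
  have hfeq : ∀ k, EuclideanSpace.equiv (Fin (n + 1)) ℂ (ξ k) = f k := by
    intro k; simp [hξ]; rfl
  -- continuity helper
  have hcont : ∀ p : MvPolynomial (Fin (n + 1)) ℂ,
      Tendsto (fun k => MvPolynomial.eval (f (φ k)) p) atTop
        (𝓝 (MvPolynomial.eval w p)) := by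
    intro p
    have hc : Continuous fun x : EuclideanSpace ℂ (Fin (n + 1)) =>
        MvPolynomial.eval (EuclideanSpace.equiv (Fin (n + 1)) ℂ x) p :=
      (MvPolynomial.continuous_eval p).comp (EuclideanSpace.equiv (Fin (n + 1)) ℂ).continuous
    have := (hc.continuousAt (x := xiL)).tendsto.comp hφtend
    simpa [Function.comp_def, hfeq, hw] using this
  -- G vanishes at the limit
  have hGw : ∀ l, MvPolynomial.eval w (G l) = 0 := by
    intro l
    have hzero : ∀ k, MvPolynomial.eval (f k) (G l) = 0 := by
      intro k
      rw [hf]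
      simp only
      rw [eval_smul_homog (hG l), hGs k l, mul_zero]
    have := hcont (G l)
    simp only [hzero] at this
    exact (tendsto_nhds_unique tendsto_const_nhds this).symm
  -- hP vanishes at the limit
  have hPw : ∀ j, MvPolynomial.eval w (hP j) = 0 := by
    intro j
    have habs : ∀ k, ‖MvPolynomial.eval (f k) (hP j)‖ ≤ 1 / ((k : ℝ) + 1) := by
      intro k
      have heval : MvPolynomial.eval (f k) (hP j)
          = (((r k)⁻¹ : ℝ) : ℂ) ^ (D j) * MvPolynomial.eval (ζs k) (P j) := by
        rw [hf]; simp only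
        rw [eval_smul_homog (hPhom j), hPaff j]
      rw [heval, norm_mul, norm_pow, Complex.norm_real, Real.norm_eq_abs,
        abs_of_pos (inv_pos.mpr (hrpos k))]
      have h1 : ((r k)⁻¹) ^ (D j) * ‖MvPolynomial.eval (ζs k) (P j)‖
          ≤ ‖MvPolynomial.eval (ζs k) (P j)‖ / e2norm (ζs k) ^ (D j) := by
        rw [div_eq_mul_inv, ← inv_pow, mul_comm ‖_‖]
        apply mul_le_mul_of_nonneg_right _ (norm_nonneg _)
        apply pow_le_pow_left₀ (by positivity)
        exact inv_anti₀ (he2pos k) (hr_ge_e2 k)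
      refine h1.trans (le_of_lt (lt_of_le_of_lt ?_ (hss k)))
      apply Finset.single_le_sum (f := fun j =>
        ‖MvPolynomial.eval (ζs k) (P j)‖ / e2norm (ζs k) ^ (D j))
        (fun i _ => div_nonneg (norm_nonneg _) (pow_nonneg (he2pos k).le _))
        (Finset.mem_univ j)
    have hto0 : Tendsto (fun k => ‖MvPolynomial.eval (f (φ k)) (hP j)‖)
        atTop (𝓝 0) := by
      apply squeeze_zero (fun k => norm_nonneg _)
        (fun k => (habs (φ k)).trans ?_) tendsto_one_div_add_atTop_nhds_zero_nat
      have : (k : ℝ) + 1 ≤ (φ k : ℝ) + 1 := by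
        have hk : k ≤ φ k := hφmono.le_apply
        have := (Nat.cast_le (α := ℝ)).mpr hk
        linarith
      exact one_div_le_one_div_of_le (by positivity) this
    have hto : Tendsto (fun k => ‖MvPolynomial.eval (f (φ k)) (hP j)‖)
        atTop (𝓝 (‖MvPolynomial.eval w (hP j)‖)) :=
      (continuous_norm.continuousAt.tendsto).comp (hcont (hP j))
    have := tendsto_nhds_unique hto hto0
    exact norm_eq_zero.mp this
  -- the first coordinate of the limit is zero
  have hw0 : w 0 = 0 := by
    have hcoord : Tendsto (fun k => f (φ k) 0) atTop (𝓝 (w 0)) := by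
      have hc : Continuous fun x : EuclideanSpace ℂ (Fin (n + 1)) =>
          (EuclideanSpace.equiv (Fin (n + 1)) ℂ x) 0 :=
        (continuous_apply 0).comp (EuclideanSpace.equiv (Fin (n + 1)) ℂ).continuous
      have := (hc.continuousAt (x := xiL)).tendsto.comp hφtend
      simpa [Function.comp_def, hfeq, hw, hξ] using this
    have hval : ∀ k, f k 0 = (((r k)⁻¹ : ℝ) : ℂ) := by
      intro k; simp [hf]
    have hto0 : Tendsto (fun k => f (φ k) 0) atTop (𝓝 0) := by
      simp only [hval]
      rw [show (0 : ℂ) = ((0 : ℝ) : ℂ) by norm_num]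
      apply Tendsto.comp (Complex.continuous_ofReal.continuousAt.tendsto)
      apply squeeze_zero (fun k => (inv_pos.mpr (hrpos (φ k))).le)
        (fun k => ?_) tendsto_one_div_add_atTop_nhds_zero_nat
      rw [one_div]
      apply inv_anti₀ (by positivity)
      have h1 : (k : ℝ) + 1 ≤ (φ k : ℝ) + 1 := by
        have hk : k ≤ φ k := hφmono.le_apply
        have := (Nat.cast_le (α := ℝ)).mpr hk
        linarith
      exact h1.trans (hrk (φ k))
    exact tendsto_nhds_unique hcoord hto0
  -- contradiction
  have hwz : w = 0 := hinf w hPw hGw hw0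
  have hξz : xiL = 0 := by
    have := congrArg (EuclideanSpace.equiv (Fin (n + 1)) ℂ).symm hwz
    simpa [hw] using this
  rw [mem_sphere_zero_iff_norm, hξz] at hxiLmem
  simp at hxiLmem
end

section
/- Let P_1, …, P_q ∈ ℂ[X_1, …, X_n] (viewed as polynomial functions ℂⁿ → ℂ) and let e_1, …, e_q be real numbers with e_j > 2 for every j. Let Ω := {ζ ∈ ℂⁿ : (P_1(ζ), …, P_q(ζ)) ≠ 0} and define S : Ω → ℝ by S(ζ) := Σ_{l=1}^q |P_l(ζ)|^{e_l}, and for j = 1, …, q define s̃_j : Ω → ℂ by s̃_j(ζ) := |P_j(ζ)|^{e_j} / (P_j(ζ)·S(ζ)) when P_j(ζ) ≠ 0 and s̃_j(ζ) := 0 when P_j(ζ) = 0. Then: (i) each s̃_j is continuously differentiable on the open set Ω when ℂⁿ and ℂ are regarded as real vector spaces (i.e. s̃_j is C¹ over ℝ on Ω); and (ii) Σ_{j=1}^q s̃_j(ζ)·P_j(ζ) = 1 for every ζ ∈ Ω. -/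
/-- `S(ζ) = Σ_l |P_l(ζ)|^{e_l}` (real powers of moduli). -/
noncomputable def Sfun {n q : ℕ} (P : Fin q → MvPolynomial (Fin n) ℂ) (e : Fin q → ℝ)
    (ζ : Fin n → ℂ) : ℝ :=
  ∑ l, ‖MvPolynomial.eval ζ (P l)‖ ^ (e l)

/-- The division functions `s̃_j(ζ) = |P_j(ζ)|^{e_j} / (P_j(ζ) S(ζ))`, extended by `0`
where `P_j(ζ) = 0`. -/
noncomputable def stilde {n q : ℕ} (P : Fin q → MvPolynomial (Fin n) ℂ) (e : Fin q → ℝ)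
    (j : Fin q) (ζ : Fin n → ℂ) : ℂ :=
  if MvPolynomial.eval ζ (P j) = 0 then 0
  else ((‖MvPolynomial.eval ζ (P j)‖ ^ (e j) : ℝ) : ℂ) /
    (MvPolynomial.eval ζ (P j) * ((Sfun P e ζ : ℝ) : ℂ))


open Complex ContinuousLinearMap

noncomputable def conjL : ℂ →L[ℝ] ℂ := Complex.conjCLE.toContinuousLinearMap

@[simp] lemma conjL_apply (z : ℂ) : conjL z = (starRingEnd ℂ) z := rfl

noncomputable def Mlin (z : ℂ) : ℂ →L[ℝ] ℂ :=
  Complex.ofRealCLM.comp (Complex.reCLM.comp (ContinuousLinearMap.mul ℝ ℂ ((starRingEnd ℂ) z)))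

@[simp] lemma Mlin_apply (z h : ℂ) :
    Mlin z h = ((Complex.re ((starRingEnd ℂ) z * h) : ℝ) : ℂ) := rfl

lemma Mlin_norm_le (z : ℂ) : ‖Mlin z‖ ≤ ‖z‖ := by
  refine ContinuousLinearMap.opNorm_le_bound _ (norm_nonneg z) fun h => ?_
  rw [Mlin_apply, Complex.norm_real]
  calc |((starRingEnd ℂ) z * h).re| ≤ ‖(starRingEnd ℂ) z * h‖ := Complex.abs_re_le_norm _
    _ = ‖z‖ * ‖h‖ := by rw [norm_mul, RCLike.norm_conj]

lemma Mlin_cont : Continuous Mlin := by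
  have h1 : Continuous fun z : ℂ => (ContinuousLinearMap.mul ℝ ℂ) ((starRingEnd ℂ) z) :=
    (ContinuousLinearMap.mul ℝ ℂ).continuous.comp continuous_conj
  have h2 : Continuous fun T : ℂ →L[ℝ] ℂ =>
      Complex.ofRealCLM.comp (Complex.reCLM.comp T) := by
    exact (((ContinuousLinearMap.compL ℝ ℂ ℝ ℂ) Complex.ofRealCLM).continuous).comp
      ((ContinuousLinearMap.compL ℝ ℂ ℂ ℝ) Complex.reCLM).continuous
  exact h2.comp h1

/-- The scalar coefficient in the first part of the derivative. -/
noncomputable def cf (a : ℝ) (z : ℂ) : ℂ := (starRingEnd ℂ) z * ((a * ‖z‖ ^ (a - 2) : ℝ) : ℂ)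

noncomputable def Df (a : ℝ) (z : ℂ) : ℂ →L[ℝ] ℂ :=
  (ContinuousLinearMap.mul ℝ ℂ (cf a z)).comp (Mlin z)
    + (ContinuousLinearMap.mul ℝ ℂ (((‖z‖ ^ a : ℝ) : ℂ))).comp conjL

lemma Df_apply (a : ℝ) (z h : ℂ) :
    Df a z h = cf a z * ((Complex.re ((starRingEnd ℂ) z * h) : ℝ) : ℂ)
      + ((‖z‖ ^ a : ℝ) : ℂ) * (starRingEnd ℂ) h := rfl

lemma norm_sq_rpow (z : ℂ) (b : ℝ) : (‖z‖ ^ 2) ^ b = ‖z‖ ^ (2 * b) := by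
  rw [← Real.rpow_natCast ‖z‖ 2, ← Real.rpow_mul (norm_nonneg z)]
  norm_num

lemma rpow_helper {x : ℝ} (hx : 0 < x) (a : ℝ) : x ^ (a - 2) * (x * x) = x ^ a := by
  have h2 : x ^ (2:ℝ) = x * x := by
    rw [show (2:ℝ) = ((2:ℕ):ℝ) by norm_num, Real.rpow_natCast]
    ring
  rw [← h2, ← Real.rpow_add hx]
  norm_num

lemma hasFDerivAt_g_ne (a : ℝ) {z : ℂ} (hz : z ≠ 0) :
    HasFDerivAt (fun w : ℂ => (starRingEnd ℂ) w * ((‖w‖ ^ a : ℝ) : ℂ)) (Df a z) z := by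
  have hz' : ‖z‖ ^ 2 ≠ 0 := pow_ne_zero _ (norm_ne_zero_iff.mpr hz)
  have hn : HasFDerivAt (fun w : ℂ => ‖w‖ ^ 2) (2 • (innerSL ℝ z)) z :=
    (hasStrictFDerivAt_norm_sq z).hasFDerivAt
  have hr : HasDerivAt (fun t : ℝ => t ^ (a / 2))
      ((a / 2) * (‖z‖ ^ 2) ^ (a / 2 - 1)) (‖z‖ ^ 2) :=
    Real.hasDerivAt_rpow_const (Or.inl hz')
  have hc : HasFDerivAt (fun w : ℂ => (‖w‖ ^ 2) ^ (a / 2))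
      (((a / 2) * (‖z‖ ^ 2) ^ (a / 2 - 1)) • (2 • (innerSL ℝ z))) z :=
    by have := hr.comp_hasFDerivAt z hn; exact this
  have hφ : HasFDerivAt (fun w : ℂ => ((‖w‖ ^ a : ℝ) : ℂ))
      (Complex.ofRealCLM.comp (((a / 2) * (‖z‖ ^ 2) ^ (a / 2 - 1)) • (2 • (innerSL ℝ z)))) z := by
    have := Complex.ofRealCLM.hasFDerivAt.comp z hc
    refine HasFDerivAt.congr_of_eventuallyEq this (Filter.Eventually.of_forall fun w => ?_)
    · simp only [Function.comp_apply, Complex.ofRealCLM_apply]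
      rw [norm_sq_rpow]
      ring_nf
  have hconj : HasFDerivAt (fun w : ℂ => (starRingEnd ℂ) w) conjL z := by
    exact Complex.conjCLE.hasFDerivAt (x := z)
  have := hconj.mul hφ
  refine HasFDerivAt.congr_fderiv this ?_
  symm
  apply ContinuousLinearMap.ext
  intro h
  simp only [Df_apply, cf, ContinuousLinearMap.add_apply, ContinuousLinearMap.smul_apply,
    ContinuousLinearMap.coe_comp', Function.comp_apply, conjL_apply,
    Complex.ofRealCLM_apply, ContinuousLinearMap.coe_smul', Pi.smul_apply]
  have hinner : (innerSL ℝ z) h = ((starRingEnd ℂ) z * h).re := by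
    simp [innerSL_apply_apply, Complex.inner]; ring
  have hpow : (‖z‖ ^ 2) ^ (a / 2 - 1) = ‖z‖ ^ (a - 2) := by
    rw [norm_sq_rpow]; ring_nf
  rw [hinner, hpow]
  simp only [smul_eq_mul]
  push_cast
  ring

lemma Df_zero (a : ℝ) (ha : 0 < a) : Df a 0 = 0 := by
  ext h
  rw [Df_apply]
  simp [cf, Real.zero_rpow ha.ne']

lemma hasFDerivAt_g_zero (a : ℝ) (ha : 0 < a) :
    HasFDerivAt (fun w : ℂ => (starRingEnd ℂ) w * ((‖w‖ ^ a : ℝ) : ℂ)) (Df a 0) 0 := by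
  rw [Df_zero a ha]
  rw [hasFDerivAt_iff_isLittleO_nhds_zero]
  rw [Asymptotics.isLittleO_iff]
  intro c hc
  have htend : Filter.Tendsto (fun h : ℂ => ‖h‖ ^ a) (nhds 0) (nhds 0) := by
    have h1 : Filter.Tendsto (fun h : ℂ => ‖h‖) (nhds 0) (nhds 0) := by
      simpa using continuous_norm.tendsto (0 : ℂ)
    have h2 : ContinuousAt (fun t : ℝ => t ^ a) 0 :=
      Real.continuousAt_rpow_const 0 a (Or.inr ha.le)
    have := (h2.tendsto).comp h1
    simpa [Real.zero_rpow ha.ne', Function.comp_def] using this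
  filter_upwards [htend.eventually_le_const hc] with h hh
  simp only [norm_zero, map_zero, zero_mul, sub_zero, ContinuousLinearMap.zero_apply, zero_add]
  have : ‖(starRingEnd ℂ) h * ((‖h‖ ^ a : ℝ) : ℂ)‖ = ‖h‖ ^ a * ‖h‖ := by
    rw [norm_mul, RCLike.norm_conj, Complex.norm_real,
      Real.norm_of_nonneg (Real.rpow_nonneg (norm_nonneg h) a)]
    ring
  rw [this]
  exact mul_le_mul_of_nonneg_right hh (norm_nonneg h)

lemma Df_cont (a : ℝ) (ha : 0 < a) : Continuous (Df a) := by
  rw [continuous_iff_continuousAt]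
  intro z
  have hsecond : Continuous fun w : ℂ =>
      (ContinuousLinearMap.mul ℝ ℂ (((‖w‖ ^ a : ℝ) : ℂ))).comp conjL := by
    refine Continuous.clm_comp ?_ continuous_const
    exact (ContinuousLinearMap.mul ℝ ℂ).continuous.comp
      (Complex.continuous_ofReal.comp
        ((Real.continuous_rpow_const ha.le).comp continuous_norm))
  rcases eq_or_ne z 0 with rfl | hz
  · -- continuity at 0 of the first term by squeezing
    have hb : ∀ w : ℂ, ‖(ContinuousLinearMap.mul ℝ ℂ (cf a w)).comp (Mlin w)‖
        ≤ a * ‖w‖ ^ a := by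
      intro w
      rcases eq_or_ne w 0 with rfl | hw
      · have : cf a 0 = 0 := by rw [cf, map_zero, zero_mul]
        rw [this, map_zero, ContinuousLinearMap.zero_comp]
        simp [Real.zero_rpow ha.ne']
      · have hcf : ‖cf a w‖ = ‖w‖ * (a * ‖w‖ ^ (a - 2)) := by
          rw [cf, norm_mul, RCLike.norm_conj, Complex.norm_real,
            Real.norm_of_nonneg (by positivity)]
        calc ‖(ContinuousLinearMap.mul ℝ ℂ (cf a w)).comp (Mlin w)‖
            ≤ ‖ContinuousLinearMap.mul ℝ ℂ (cf a w)‖ * ‖Mlin w‖ :=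
              ContinuousLinearMap.opNorm_comp_le _ _
          _ ≤ ‖cf a w‖ * ‖Mlin w‖ := by
              apply mul_le_mul_of_nonneg_right
                (ContinuousLinearMap.opNorm_mul_apply_le _ _ _) (norm_nonneg _)
          _ ≤ ‖w‖ * (a * ‖w‖ ^ (a - 2)) * ‖w‖ := by
              rw [hcf]
              apply mul_le_mul_of_nonneg_left (Mlin_norm_le w) (by positivity)
          _ = a * (‖w‖ ^ (a - 2) * (‖w‖ * ‖w‖)) := by ring
          _ = a * ‖w‖ ^ a := by rw [rpow_helper (norm_pos_iff.mpr hw) a]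
    have hfirst : Filter.Tendsto
        (fun w : ℂ => (ContinuousLinearMap.mul ℝ ℂ (cf a w)).comp (Mlin w))
        (nhds 0) (nhds 0) := by
      apply squeeze_zero_norm hb
      have h2 : ContinuousAt (fun t : ℝ => a * t ^ a) 0 :=
        continuousAt_const.mul (Real.continuousAt_rpow_const 0 a (Or.inr ha.le))
      have := (h2.tendsto).comp (by simpa using continuous_norm.tendsto (0 : ℂ))
      simpa [Real.zero_rpow ha.ne', Function.comp_def] using this
    unfold Df
    apply ContinuousAt.add _ hsecond.continuousAt
    have h0 : (ContinuousLinearMap.mul ℝ ℂ (cf a (0:ℂ))).comp (Mlin 0) = 0 := by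
      rw [show cf a 0 = 0 by rw [cf, map_zero, zero_mul], map_zero,
        ContinuousLinearMap.zero_comp]
    rw [ContinuousAt, h0]
    exact hfirst
  · unfold Df
    apply ContinuousAt.add _ hsecond.continuousAt
    have hcomp : Continuous fun p : (ℂ →L[ℝ] ℂ) × (ℂ →L[ℝ] ℂ) => p.1.comp p.2 :=
      (ContinuousLinearMap.compL ℝ ℂ ℂ ℂ).continuous₂.comp continuous_id
    refine ContinuousAt.comp (x := z) hcomp.continuousAt (ContinuousAt.prodMk ?_ Mlin_cont.continuousAt)
    refine ((ContinuousLinearMap.mul ℝ ℂ).continuous.continuousAt).comp ?_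
    refine ContinuousAt.mul (continuous_conj.continuousAt) ?_
    refine Complex.continuous_ofReal.continuousAt.comp ?_
    refine ContinuousAt.mul continuousAt_const ?_
    exact (Real.continuousAt_rpow_const _ _ (Or.inl (norm_ne_zero_iff.mpr hz))).comp
      continuous_norm.continuousAt

lemma gC1 (a : ℝ) (ha : 0 < a) :
    ContDiff ℝ 1 (fun w : ℂ => (starRingEnd ℂ) w * ((‖w‖ ^ a : ℝ) : ℂ)) := by
  have hder : ∀ z : ℂ, HasFDerivAt (fun w : ℂ => (starRingEnd ℂ) w * ((‖w‖ ^ a : ℝ) : ℂ))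
      (Df a z) z := by
    intro z
    rcases eq_or_ne z 0 with rfl | hz
    · exact hasFDerivAt_g_zero a ha
    · exact hasFDerivAt_g_ne a hz
  rw [contDiff_one_iff_fderiv]
  refine ⟨fun z => (hder z).differentiableAt, ?_⟩
  have : (fderiv ℝ fun w : ℂ => (starRingEnd ℂ) w * ((‖w‖ ^ a : ℝ) : ℂ)) = Df a :=
    funext fun z => (hder z).fderiv
  rw [this]
  exact Df_cont a ha

open Complex MvPolynomial

lemma contDiff_mvpoly {n : ℕ} (p : MvPolynomial (Fin n) ℂ) :
    ContDiff ℝ 1 (fun ζ : Fin n → ℂ => MvPolynomial.eval ζ p) := by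
  induction p using MvPolynomial.induction_on with
  | C a => simpa using contDiff_const (c := a)
  | add p q hp hq => simpa using hp.add hq
  | mul_X p i hp =>
      have hX : ContDiff ℝ 1 (fun ζ : Fin n → ℂ => ζ i) := by
        have := ((ContinuousLinearMap.proj (R := ℂ) (φ := fun _ : Fin n => ℂ) i).restrictScalars
          ℝ).contDiff (n := 1)
        exact this
      simpa using hp.mul hX

lemma SC1 {n q : ℕ} (P : Fin q → MvPolynomial (Fin n) ℂ) (e : Fin q → ℝ)
    (he : ∀ j, 2 < e j) :
    ContDiff ℝ 1 (fun ζ : Fin n → ℂ => ∑ l, ‖MvPolynomial.eval ζ (P l)‖ ^ (e l)) := by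
  apply ContDiff.sum
  intro l _
  have key : (fun ζ : Fin n → ℂ => ‖MvPolynomial.eval ζ (P l)‖ ^ (e l))
      = (fun t : ℝ => t ^ (e l / 2)) ∘ (fun ζ => ‖MvPolynomial.eval ζ (P l)‖ ^ 2) := by
    funext ζ
    simp only [Function.comp_apply]
    rw [← Real.rpow_natCast ‖MvPolynomial.eval ζ (P l)‖ 2,
      ← Real.rpow_mul (norm_nonneg _)]
    congr 1
    push_cast
    ring
  rw [key]
  have h1 : ContDiff ℝ 1 (fun t : ℝ => t ^ (e l / 2)) := by
    have : ((1 : ℕ) : ℝ) ≤ e l / 2 := by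
      push_cast
      linarith [he l]
    exact_mod_cast Real.contDiff_rpow_const_of_le this
  exact h1.comp ((contDiff_mvpoly (P l)).norm_sq ℝ)

lemma Sfun_pos {n q : ℕ} (P : Fin q → MvPolynomial (Fin n) ℂ) (e : Fin q → ℝ)
    {ζ : Fin n → ℂ} (j : Fin q) (hj : MvPolynomial.eval ζ (P j) ≠ 0) :
    0 < Sfun P e ζ := by
  apply Finset.sum_pos' (fun l _ => Real.rpow_nonneg (norm_nonneg _) _)
  exact ⟨j, Finset.mem_univ j, Real.rpow_pos_of_pos (norm_pos_iff.mpr hj) _⟩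

lemma stilde_eq {n q : ℕ} (P : Fin q → MvPolynomial (Fin n) ℂ) (e : Fin q → ℝ)
    (he : ∀ j, 2 < e j) (j : Fin q) :
    stilde P e j = fun ζ =>
      ((starRingEnd ℂ) (MvPolynomial.eval ζ (P j))
          * ((‖MvPolynomial.eval ζ (P j)‖ ^ (e j - 2) : ℝ) : ℂ))
        / ((Sfun P e ζ : ℝ) : ℂ) := by
  funext ζ
  rw [stilde]
  split_ifs with h
  · rw [h]
    simp [Real.zero_rpow (show e j - 2 ≠ 0 by linarith [he j])]
  · have hS : (0:ℝ) < Sfun P e ζ := Sfun_pos P e j h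
    have hSc : ((Sfun P e ζ : ℝ) : ℂ) ≠ 0 := by
      exact_mod_cast hS.ne'
    set w := MvPolynomial.eval ζ (P j) with hw
    have hwpos : (0:ℝ) < ‖w‖ := norm_pos_iff.mpr h
    rw [div_eq_div_iff (mul_ne_zero h hSc) hSc]
    have key : (starRingEnd ℂ) w * ((‖w‖ ^ (e j - 2) : ℝ) : ℂ) * w
        = ((‖w‖ ^ (e j) : ℝ) : ℂ) := by
      calc (starRingEnd ℂ) w * ((‖w‖ ^ (e j - 2) : ℝ) : ℂ) * w
          = ((‖w‖ ^ (e j - 2) : ℝ) : ℂ) * (w * (starRingEnd ℂ) w) := by ring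
        _ = ((‖w‖ ^ (e j - 2) : ℝ) : ℂ) * ((Complex.normSq w : ℝ) : ℂ) := by
            rw [Complex.mul_conj]
        _ = ((‖w‖ ^ (e j - 2) * Complex.normSq w : ℝ) : ℂ) := by push_cast; ring
        _ = ((‖w‖ ^ (e j) : ℝ) : ℂ) := by
            congr 1
            rw [Complex.normSq_eq_norm_sq, sq]
            exact rpow_helper hwpos (e j)
    rw [← key]
    ring

lemma stilde_contDiffOn {n q : ℕ} (P : Fin q → MvPolynomial (Fin n) ℂ) (e : Fin q → ℝ)
    (he : ∀ j, 2 < e j) (j : Fin q) :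
    ContDiffOn ℝ 1 (stilde P e j) {ζ | ∃ i, MvPolynomial.eval ζ (P i) ≠ 0} := by
  rw [stilde_eq P e he j]
  have hnum : ContDiff ℝ 1 (fun ζ : Fin n → ℂ =>
      (starRingEnd ℂ) (MvPolynomial.eval ζ (P j))
        * ((‖MvPolynomial.eval ζ (P j)‖ ^ (e j - 2) : ℝ) : ℂ)) :=
    (gC1 (e j - 2) (by linarith [he j])).comp (contDiff_mvpoly (P j))
  have hden : ContDiff ℝ 1 (fun ζ : Fin n → ℂ => ((Sfun P e ζ : ℝ) : ℂ)) := by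
    have h1 : ContDiff ℝ 1 (fun t : ℝ => ((t : ℝ) : ℂ)) :=
      Complex.ofRealCLM.contDiff (n := (1 : WithTop ℕ∞))
    have h2 : ContDiff ℝ 1 (Sfun P e) := SC1 P e he
    exact h1.comp h2
  rintro ζ ⟨i, hi⟩
  have hB : ((Sfun P e ζ : ℝ) : ℂ) ≠ 0 := by
    exact_mod_cast (Sfun_pos P e i hi).ne'
  have hinv : ContDiffAt ℝ 1 (fun ζ : Fin n → ℂ => (((Sfun P e ζ : ℝ) : ℂ))⁻¹) ζ :=
    (contDiffAt_inv ℝ hB).comp ζ hden.contDiffAt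
  have hmul := hnum.contDiffAt.mul hinv
  have : ContDiffAt ℝ 1 (fun ζ : Fin n → ℂ =>
      ((starRingEnd ℂ) (MvPolynomial.eval ζ (P j))
          * ((‖MvPolynomial.eval ζ (P j)‖ ^ (e j - 2) : ℝ) : ℂ))
        / ((Sfun P e ζ : ℝ) : ℂ)) ζ := by
    simpa [div_eq_mul_inv] using hmul
  exact this.contDiffWithinAt

/-- on `Ω = ℂⁿ ∖ V(P)`, the functions `s̃_j` are `C¹` over `ℝ` and satisfy
the Bézout-type identity `Σ_j s̃_j P_j = 1`, provided each exponent `e_j > 2`. -/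
theorem statement6 (n q : ℕ) (P : Fin q → MvPolynomial (Fin n) ℂ)
    (e : Fin q → ℝ) (he : ∀ j, 2 < e j)
    (Ω : Set (Fin n → ℂ)) (hΩ : Ω = {ζ | ∃ j, MvPolynomial.eval ζ (P j) ≠ 0}) :
    IsOpen Ω ∧
    (∀ j, ContDiffOn ℝ 1 (stilde P e j) Ω) ∧
    (∀ ζ ∈ Ω, ∑ j, stilde P e j ζ * MvPolynomial.eval ζ (P j) = 1) := by
  subst hΩ
  refine ⟨?_, fun j => stilde_contDiffOn P e he j, ?_⟩
  · have hset : {ζ : Fin n → ℂ | ∃ j, MvPolynomial.eval ζ (P j) ≠ 0}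
        = ⋃ j, (fun ζ => MvPolynomial.eval ζ (P j)) ⁻¹' ({0}ᶜ) := by
      ext ζ; simp
    rw [hset]
    exact isOpen_iUnion fun j =>
      isOpen_compl_singleton.preimage (contDiff_mvpoly (P j)).continuous
  · rintro ζ ⟨j0, hj0⟩
    have hS : (0:ℝ) < Sfun P e ζ := Sfun_pos P e j0 hj0
    have hSc : ((Sfun P e ζ : ℝ) : ℂ) ≠ 0 := by exact_mod_cast hS.ne'
    have hterm : ∀ j, stilde P e j ζ * MvPolynomial.eval ζ (P j)
        = ((‖MvPolynomial.eval ζ (P j)‖ ^ (e j) : ℝ) : ℂ)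
          / ((Sfun P e ζ : ℝ) : ℂ) := by
      intro j
      rw [stilde]
      split_ifs with h
      · rw [h]
        simp [Real.zero_rpow (show e j ≠ 0 by linarith [he j])]
      · field_simp
    rw [Finset.sum_congr rfl (fun j _ => hterm j), ← Finset.sum_div]
    have : (∑ j, ((‖MvPolynomial.eval ζ (P j)‖ ^ (e j) : ℝ) : ℂ))
        = ((Sfun P e ζ : ℝ) : ℂ) := by
      rw [Sfun]
      push_cast
      rfl
    rw [this, div_self hSc]
end
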